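/- arXiv:2007.02315 — 2 statements merged into one kernel-verified Lean document; each statement's English description precedes it below -/
import Mathlib

section
/- Let E be a real inner product space, G : E → ℝ differentiable with gradient ∇G and L-smooth with L > 0, and let (Ω, P) be a probability space. Fix x ∈ E, constants δ₁ ≥ δ₂ > 0 and δ₃ ≥ 0, and a step size γ with 0 < γ ≤ δ₂/(L·(1 + δ₁²)). Let v : Ω → E be Bochner integrable with mean m = ∫ v dP, with ω ↦ ‖v(ω)‖² integrable and ω ↦ G(x − γ·v(ω)) integrable, and assume: (a) ‖m‖ ≤ δ₁·‖∇G(x)‖, (b) ⟪∇G(x), m⟫ ≥ δ₂·‖∇G(x)‖², and (c) ∫ ‖v(ω)‖² dP(ω) − ‖m‖² ≤ δ₃ + ‖∇G(x)‖². Then ∫ G(x − γ·v(ω)) dP(ω) − G(x) ≤ −(γ·δ₂/2)·‖∇G(x)‖² + (L·γ²·δ₃)/2. -/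
open MeasureTheory

/-- One-step expected descent in the non-ideal scenario (proof of Theorem 5, Appendix E):
under the first and second moment conditions (Assumption 5) on the aggregation
direction `v` and step size `0 < γ ≤ δ₂/(L(1 + δ₁²))`,
`E[G(x - γ v)] - G(x) ≤ -(γδ₂/2)‖∇G(x)‖² + Lγ²δ₃/2`. -/
theorem expected_descent_nonideal {E : Type*} [NormedAddCommGroup E] [InnerProductSpace ℝ E]
    [CompleteSpace E]
    {Ω : Type*} [MeasurableSpace Ω] (P : Measure Ω) [IsProbabilityMeasure P]
    (G : E → ℝ) (gradG : E → E) (L : ℝ) (hL : 0 < L)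
    (hdiff : ∀ x, HasGradientAt G (gradG x) x)
    (hsmooth : ∀ x y, G y - G x ≤ (inner ℝ (gradG x) (y - x) : ℝ) + L / 2 * ‖y - x‖ ^ 2)
    (x : E) (δ₁ δ₂ δ₃ : ℝ) (hδ₂ : 0 < δ₂) (hδ₁₂ : δ₂ ≤ δ₁) (hδ₃ : 0 ≤ δ₃)
    (γ : ℝ) (hγ0 : 0 < γ) (hγL : γ ≤ δ₂ / (L * (1 + δ₁ ^ 2)))
    (v : Ω → E) (hintv : Integrable v P)
    (hintv2 : Integrable (fun ω => ‖v ω‖ ^ 2) P)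
    (hintG : Integrable (fun ω => G (x - γ • v ω)) P)
    (ha : ‖∫ ω, v ω ∂P‖ ≤ δ₁ * ‖gradG x‖)
    (hb : (inner ℝ (gradG x) (∫ ω, v ω ∂P) : ℝ) ≥ δ₂ * ‖gradG x‖ ^ 2)
    (hc : (∫ ω, ‖v ω‖ ^ 2 ∂P) - ‖∫ ω, v ω ∂P‖ ^ 2 ≤ δ₃ + ‖gradG x‖ ^ 2) :
    (∫ ω, G (x - γ • v ω) ∂P) - G x ≤
      -(γ * δ₂ / 2) * ‖gradG x‖ ^ 2 + L * γ ^ 2 * δ₃ / 2 := by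
  set g := gradG x with hg
  set m := ∫ ω, v ω ∂P with hm
  have hδ₁0 : 0 < δ₁ := lt_of_lt_of_le hδ₂ hδ₁₂
  have hden : 0 < L * (1 + δ₁ ^ 2) := by positivity
  have hγLδ : γ * (L * (1 + δ₁ ^ 2)) ≤ δ₂ := by
    rw [← le_div_iff₀ hden]; exact hγL
  -- pointwise smoothness bound
  have hpt : ∀ ω, G (x - γ • v ω) - G x ≤
      -(γ * (inner ℝ g (v ω) : ℝ)) + L / 2 * γ ^ 2 * ‖v ω‖ ^ 2 := by
    intro ω
    have h := hsmooth x (x - γ • v ω)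
    have h1 : x - γ • v ω - x = -(γ • v ω) := by abel
    rw [h1] at h
    have e1 : (inner ℝ g (-(γ • v ω)) : ℝ) = -(γ * (inner ℝ g (v ω) : ℝ)) := by
      rw [inner_neg_right, real_inner_smul_right]
    have e2 : ‖-(γ • v ω)‖ ^ 2 = γ ^ 2 * ‖v ω‖ ^ 2 := by
      rw [norm_neg, norm_smul, mul_pow, Real.norm_eq_abs, sq_abs]
    rw [e1, e2] at h
    linarith [h]
  -- integrate
  have hintI : Integrable (fun ω => (inner ℝ g (v ω) : ℝ)) P := hintv.const_inner g
  have hintrhs : Integrable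
      (fun ω => -(γ * (inner ℝ g (v ω) : ℝ)) + L / 2 * γ ^ 2 * ‖v ω‖ ^ 2) P :=
    ((hintI.const_mul γ).neg).add (hintv2.const_mul (L / 2 * γ ^ 2))
  have hintlhs : Integrable (fun ω => G (x - γ • v ω) - G x) P :=
    hintG.sub (integrable_const _)
  have key := integral_mono hintlhs hintrhs hpt
  have hIsplit : (∫ ω, (G (x - γ • v ω) - G x) ∂P)
      = (∫ ω, G (x - γ • v ω) ∂P) - G x := by
    rw [integral_sub hintG (integrable_const _), integral_const]
    simp
  have hI : (∫ ω, (inner ℝ g (v ω) : ℝ) ∂P) = (inner ℝ g m : ℝ) := integral_inner hintv g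
  have hRsplit : (∫ ω, (-(γ * (inner ℝ g (v ω) : ℝ)) + L / 2 * γ ^ 2 * ‖v ω‖ ^ 2) ∂P)
      = -(γ * (inner ℝ g m : ℝ)) + L / 2 * γ ^ 2 * ∫ ω, ‖v ω‖ ^ 2 ∂P := by
    have hintneg : Integrable (fun ω => -(γ * (inner ℝ g (v ω) : ℝ))) P :=
      (hintI.const_mul γ).neg
    rw [integral_add hintneg (hintv2.const_mul (L / 2 * γ ^ 2))]
    rw [show (fun ω => -(γ * (inner ℝ g (v ω) : ℝ))) = fun ω => (-γ) * (inner ℝ g (v ω) : ℝ) by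
      funext ω; ring]
    rw [integral_const_mul, integral_const_mul, hI]; ring
  rw [hIsplit, hRsplit] at key
  -- arithmetic
  have hm2 : ‖m‖ ^ 2 ≤ δ₁ ^ 2 * ‖g‖ ^ 2 := by
    have := mul_self_le_mul_self (norm_nonneg m) ha
    nlinarith [norm_nonneg m, norm_nonneg g]
  have hS : (∫ ω, ‖v ω‖ ^ 2 ∂P) ≤ δ₃ + (1 + δ₁ ^ 2) * ‖g‖ ^ 2 := by nlinarith
  have hN : (0:ℝ) ≤ ‖g‖ ^ 2 := sq_nonneg _
  nlinarith [mul_le_mul_of_nonneg_right hγLδ (mul_nonneg (mul_nonneg hγ0.le hN) (by norm_num : (0:ℝ) ≤ 1/2)),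
    mul_le_mul_of_nonneg_left hS (by positivity : (0:ℝ) ≤ L / 2 * γ ^ 2),
    mul_le_mul_of_nonneg_left hb (hγ0.le)]
end

section
/- Let E be a real inner product space, G : E → ℝ differentiable with gradient ∇G, L-smooth with L > 0 and Φ-strongly convex with 0 < Φ ≤ L, and let x* ∈ E be a global minimizer of G. Fix constants δ₁ ≥ δ₂ > 0, δ₃ ≥ 0, and a step size γ with 0 < γ ≤ δ₂/(L·(1 + δ₁²)). Let x, v : ℕ → E satisfy x(t+1) = x(t) − γ·v(t) for all t ≥ 1, and assume for every t ≥ 1: ⟪∇G(x(t)), v(t)⟫ ≥ δ₂·‖∇G(x(t))‖² and ‖v(t)‖² ≤ δ₃ + (1 + δ₁²)·‖∇G(x(t))‖². Then for every T ≥ 1: G(x(T)) − G(x*) ≤ γ·δ₃·L/(2·Φ·δ₂) + (1 − γ·δ₂·Φ)^{T−1} · ( G(x(1)) − G(x*) − γ·δ₃·L/(2·Φ·δ₂) ). -/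
/-- Theorem 5 of the paper: convergence of FL in the non-ideal scenario, with the
first and second moment conditions of Assumption 5 imposed pointwise on the
aggregated update directions `v t`. -/
theorem fl_convergence_nonideal {E : Type*} [NormedAddCommGroup E] [InnerProductSpace ℝ E]
    [CompleteSpace E]
    (G : E → ℝ) (gradG : E → E) (L Φ : ℝ) (hL : 0 < L) (hΦ : 0 < Φ) (hΦL : Φ ≤ L)
    (hdiff : ∀ x, HasGradientAt G (gradG x) x)
    (hsmooth : ∀ x y, G y - G x ≤ (inner ℝ (gradG x) (y - x) : ℝ) + L / 2 * ‖y - x‖ ^ 2)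
    (hsc : ∀ x y, G y - G x ≥ (inner ℝ (gradG x) (y - x) : ℝ) + Φ / 2 * ‖y - x‖ ^ 2)
    (xstar : E) (hmin : ∀ y, G xstar ≤ G y)
    (δ₁ δ₂ δ₃ : ℝ) (hδ₂ : 0 < δ₂) (hδ₁₂ : δ₂ ≤ δ₁) (hδ₃ : 0 ≤ δ₃)
    (γ : ℝ) (hγ0 : 0 < γ) (hγL : γ ≤ δ₂ / (L * (1 + δ₁ ^ 2)))
    (x v : ℕ → E)
    (hrec : ∀ t, 1 ≤ t → x (t + 1) = x t - γ • v t)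
    (hb : ∀ t, 1 ≤ t → (inner ℝ (gradG (x t)) (v t) : ℝ) ≥ δ₂ * ‖gradG (x t)‖ ^ 2)
    (hc : ∀ t, 1 ≤ t → ‖v t‖ ^ 2 ≤ δ₃ + (1 + δ₁ ^ 2) * ‖gradG (x t)‖ ^ 2) :
    ∀ T, 1 ≤ T →
      G (x T) - G xstar ≤
        γ * δ₃ * L / (2 * Φ * δ₂) +
          (1 - γ * δ₂ * Φ) ^ (T - 1) * (G (x 1) - G xstar - γ * δ₃ * L / (2 * Φ * δ₂)) := by
  set c : ℝ := γ * δ₃ * L / (2 * Φ * δ₂) with hc_def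
  have hd1 : (0:ℝ) < 1 + δ₁ ^ 2 := by nlinarith
  have hγL' : γ * (L * (1 + δ₁ ^ 2)) ≤ δ₂ :=
    (le_div_iff₀ (by positivity)).mp hγL
  -- ρ = 1 - γ δ₂ Φ ≥ 0
  have hρ : 0 ≤ 1 - γ * δ₂ * Φ := by
    have h1 : γ * (L * (1 + δ₁ ^ 2)) * (δ₂ * Φ) ≤ δ₂ * (δ₂ * Φ) :=
      mul_le_mul_of_nonneg_right hγL' (by positivity)
    have h2 : δ₂ * (δ₂ * Φ) ≤ δ₁ * δ₁ * L := by
      have h5 : δ₂ * δ₂ ≤ δ₁ * δ₁ :=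
        mul_le_mul hδ₁₂ hδ₁₂ hδ₂.le (hδ₂.trans_le hδ₁₂).le
      nlinarith
    have h3 : δ₁ * δ₁ * L ≤ L * (1 + δ₁ ^ 2) := by nlinarith
    have h4 : (0:ℝ) < L * (1 + δ₁ ^ 2) := by positivity
    nlinarith
  -- PL inequality
  have hPL : ∀ y : E, G y - G xstar ≤ ‖gradG y‖ ^ 2 / (2 * Φ) := by
    intro y
    have h1 := hsc y xstar
    have h2 : (0:ℝ) ≤ ‖Φ • (xstar - y) + gradG y‖ ^ 2 := sq_nonneg _
    rw [norm_add_sq_real, norm_smul, real_inner_smul_left] at h2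
    simp only [Real.norm_eq_abs, abs_of_pos hΦ] at h2
    rw [real_inner_comm (gradG y) (xstar - y)] at h2
    rw [le_div_iff₀ (by positivity)]
    nlinarith [mul_le_mul_of_nonneg_right h1 (by positivity : (0:ℝ) ≤ 2 * Φ)]
  -- per-step contraction
  have key : ∀ t, 1 ≤ t → G (x (t + 1)) - G xstar - c ≤
      (1 - γ * δ₂ * Φ) * (G (x t) - G xstar - c) := by
    intro t ht
    have hs := hsmooth (x t) (x (t + 1))
    rw [hrec t ht] at hs
    have hdiffeq : x t - γ • v t - x t = (-γ) • v t := by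
      rw [neg_smul]; abel
    rw [hdiffeq, real_inner_smul_right, norm_smul] at hs
    simp only [Real.norm_eq_abs, abs_neg, abs_of_pos hγ0] at hs
    have hbt := hb t ht
    have hct := hc t ht
    have hPLt := hPL (x t)
    rw [le_div_iff₀ (by positivity : (0:ℝ) < 2 * Φ)] at hPLt
    rw [hrec t ht]
    have hcval : γ * δ₂ * Φ * c = L * γ ^ 2 * δ₃ / 2 := by
      rw [hc_def, mul_div_assoc', div_eq_div_iff (by positivity) (by norm_num)]
      ring
    have hg2 : (0:ℝ) ≤ ‖gradG (x t)‖ ^ 2 := sq_nonneg _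
    have hstep : γ * (γ * (L * (1 + δ₁ ^ 2))) * ‖gradG (x t)‖ ^ 2 ≤
        γ * δ₂ * ‖gradG (x t)‖ ^ 2 := by
      have := mul_le_mul_of_nonneg_right hγL' hg2
      nlinarith [mul_le_mul_of_nonneg_left this (le_of_lt hγ0)]
    nlinarith [mul_le_mul_of_nonneg_left hct
        (by positivity : (0:ℝ) ≤ L * γ ^ 2 / 2),
      mul_le_mul_of_nonneg_left hbt (le_of_lt hγ0),
      mul_le_mul_of_nonneg_left hPLt
        (by positivity : (0:ℝ) ≤ γ * δ₂ / 2)]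
  -- induction
  intro T hT
  induction T with
  | zero => omega
  | succ n ih =>
    rcases Nat.eq_or_lt_of_le hT with h | h
    · simp [← h]
    · have hn : 1 ≤ n := by omega
      have hihn := ih hn
      have hk := key n hn
      have : (1 - γ * δ₂ * Φ) * (G (x n) - G xstar - c) ≤
          (1 - γ * δ₂ * Φ) * ((1 - γ * δ₂ * Φ) ^ (n - 1) *
            (G (x 1) - G xstar - c)) := by
        apply mul_le_mul_of_nonneg_left _ hρ
        linarith
      have hpow : (1 - γ * δ₂ * Φ) * (1 - γ * δ₂ * Φ) ^ (n - 1)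
          = (1 - γ * δ₂ * Φ) ^ (n + 1 - 1) := by
        rw [← pow_succ']
        congr 1
        omega
      calc G (x (n + 1)) - G xstar ≤ c + (1 - γ * δ₂ * Φ) * (G (x n) - G xstar - c) := by
            linarith
        _ ≤ c + (1 - γ * δ₂ * Φ) ^ (n + 1 - 1) * (G (x 1) - G xstar - c) := by
            rw [← hpow]; linarith [this];
end
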